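/- If S is a stationary set of countable limit ordinals carrying a ladder system ⟨x_α : α ∈ S⟩, then the associated Baumgartner type (S, <_lex) is not σ-scattered. -/

import Mathlib

/-- The first uncountable ordinal, `ω₁`. -/
noncomputable def ω1 : Ordinal := (Cardinal.aleph 1).ord

/-- `x` is a ladder system on the set `S` of countable limit ordinals: each `α ∈ S` is a
countable limit ordinal and `x α : ℕ → Ordinal` is strictly increasing with range contained
and cofinal in `α`. -/
def IsLadderOn (S : Set Ordinal) (x : Ordinal → ℕ → Ordinal) : Prop :=
  ∀ α ∈ S, α < ω1 ∧ Order.IsSuccLimit α ∧ StrictMono (x α) ∧ (∀ n : ℕ, x α n < α) ∧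
    ∀ β < α, ∃ n : ℕ, β < x α n

/-- The lexicographic order associated to a ladder system: `α <lex β` iff at the least `n`
where `x α` and `x β` differ we have `x α n < x β n`. -/
def LexLt (x : Ordinal → ℕ → Ordinal) (α β : Ordinal) : Prop :=
  ∃ n : ℕ, (∀ m < n, x α m = x β m) ∧ x α n < x β n

/-- `C` is a club subset of `ω₁`: a set of countable ordinals which is unbounded in `ω₁`
and contains the supremum of each of its nonempty bounded subsets. -/
def IsClubIn (C : Set Ordinal) : Prop :=
  C ⊆ Set.Iio ω1 ∧ (∀ β < ω1, ∃ γ ∈ C, β < γ) ∧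
    ∀ D ⊆ C, D.Nonempty → (∃ β < ω1, ∀ γ ∈ D, γ ≤ β) → sSup D ∈ C

/-- `S` is a stationary subset of `ω₁`: it meets every club subset of `ω₁`. -/
def IsStat (S : Set Ordinal) : Prop := ∀ C : Set Ordinal, IsClubIn C → (S ∩ C).Nonempty

/-- A set `A` is scattered with respect to the relation `r` if there is no map of `ℚ`
into `A` which is strictly increasing from `<` to `r`. -/
def RelScatteredOn (r : Ordinal → Ordinal → Prop) (A : Set Ordinal) : Prop :=
  ¬ ∃ f : ℚ → Ordinal, (∀ q : ℚ, f q ∈ A) ∧ ∀ p q : ℚ, p < q → r (f p) (f q)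

/-- `(S, r)` is σ-scattered: `S` is a countable union of subsets, each scattered
with respect to `r`. -/
def RelSigmaScatteredOn (r : Ordinal → Ordinal → Prop) (S : Set Ordinal) : Prop :=
  ∃ A : ℕ → Set Ordinal, (⋃ n, A n) = S ∧ ∀ n : ℕ, RelScatteredOn r (A n)

/-!
Some piece `A` of a countable cover of `S` is stationary, and every stationary `A ⊆ S` splits
into stationary `B, C ⊆ A` with `B` entirely `<lex`-below `C`. Indeed, by pressing down once per
coordinate, all `α ∈ A` outside a nonstationary set have each finite initial segment of their
ladder shared by a stationary part of `A`; two such `α ≠ β` have ladders first differing at some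
`n`, and the parts sharing their first `n + 1` rungs are separated. Splitting along the binary
tree and choosing a point in each node, ordered in-order, embeds `ℚ` into `A`.
-/

open Set Ordinal Cardinal

lemma omega1_eq_omega_one : ω1 = ω₁ := ord_aleph 1

lemma omega1_pos : 0 < ω1 := omega1_eq_omega_one ▸ omega_pos 1

lemma isSuccLimit_omega1 : Order.IsSuccLimit ω1 := isSuccLimit_ord (aleph0_le_aleph 1)

lemma iSup_lt_omega1 {ι : Type*} [Countable ι] {f : ι → Ordinal} (h : ∀ i, f i < ω1) :
    ⨆ i, f i < ω1 := by
  rw [omega1_eq_omega_one] at *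
  exact Ordinal.iSup_lt_omega_one h

lemma countable_Iic_of_lt_omega1 {β : Ordinal} (h : β < ω1) : (Iic β).Countable := by
  rw [← Order.Iio_succ, ← le_aleph0_iff_set_countable, Cardinal.mk_Iio_ordinal, lift_le_aleph0,
    ← lt_aleph_one_iff, ← lt_ord]
  exact isSuccLimit_omega1.succ_lt h

lemma IsClubIn.mem_of_forall_lt_exists {C : Set Ordinal} (hC : IsClubIn C) {δ : Ordinal}
    (hδ : δ < ω1) (h0 : 0 < δ) (h : ∀ γ < δ, ∃ c ∈ C, γ < c ∧ c ≤ δ) : δ ∈ C := by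
  obtain ⟨c, hc, -, hcδ⟩ := h 0 h0
  have hsup : sSup {c ∈ C | c ≤ δ} = δ :=
    csSup_eq_of_forall_le_of_forall_lt_exists_gt ⟨c, hc, hcδ⟩ (fun _ h => h.2)
      fun γ hγ => by obtain ⟨c, hc, hγc, hcδ⟩ := h γ hγ; exact ⟨c, ⟨hc, hcδ⟩, hγc⟩
  exact hsup ▸ hC.2.2 _ (sep_subset _ _) ⟨c, hc, hcδ⟩ ⟨δ, hδ, fun _ h => h.2⟩

/-- With `r = id` this is the diagonal intersection of the `C i`; with `r = 0`, their
intersection (minus `0`). -/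
theorem IsClubIn.diagonal {ι : Type*} {C : ι → Set Ordinal} (r : ι → Ordinal)
    (hC : ∀ i, IsClubIn (C i)) (hr : ∀ β < ω1, {i | r i ≤ β}.Countable) :
    IsClubIn {δ | δ < ω1 ∧ 0 < δ ∧ ∀ i, r i < δ → δ ∈ C i} := by
  refine ⟨fun δ hδ => hδ.1, fun β hβ => ?_, fun D hD ⟨d, hd⟩ ⟨β, hβ, hDβ⟩ => ?_⟩
  · choose! g hgC hg using fun i β (hβ : β < ω1) => (hC i).2.1 β hβ
    -- `h b` bounds a point above `b` of every `C i` with `r i ≤ b`; its closure point above `β`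
    -- is then a limit of each relevant `C i`.
    let h : Ordinal → Ordinal := fun b => ⨆ i : {i | r i ≤ b}, g i b
    have hh : ∀ b < ω1, h b < ω1 := fun b hb =>
      have := (hr b hb).to_subtype
      iSup_lt_omega1 fun i => (hC i).1 (hgC i b hb)
    have hgh : ∀ b < ω1, ∀ i, r i ≤ b → g i b ≤ h b := fun b hb i hi =>
      le_ciSup (f := fun i : {i | r i ≤ b} => g i b)
        ⟨ω1, by rintro _ ⟨j, rfl⟩; exact ((hC j).1 (hgC j b hb)).le⟩ ⟨i, hi⟩
    have hδ : nfp h (Order.succ β) < ω1 :=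
      nfp_lt_ord (by rw [omega1_eq_omega_one, cof_omega_one]; exact aleph0_lt_aleph_one) hh
        (isSuccLimit_omega1.succ_lt hβ)
    have hβδ : β < nfp h (Order.succ β) := (Order.lt_succ β).trans_le (le_nfp h _)
    have hδ0 : 0 < nfp h (Order.succ β) := (zero_le (a := β)).trans_lt hβδ
    refine ⟨_, ⟨hδ, hδ0, fun i hi => ?_⟩, hβδ⟩
    refine (hC i).mem_of_forall_lt_exists hδ hδ0 fun γ hγ => ?_
    obtain ⟨n, hn⟩ := lt_nfp_iff.1 (max_lt hγ hi)
    have hn' : h^[n] (Order.succ β) < ω1 := (iterate_le_nfp h _ n).trans_lt hδ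
    refine ⟨g i _, hgC i _ hn', (le_max_left _ _).trans_lt (hn.trans (hg i _ hn')), ?_⟩
    calc g i (h^[n] (Order.succ β)) ≤ h (h^[n] (Order.succ β)) :=
          hgh _ hn' i ((le_max_right _ _).trans hn.le)
      _ = h^[n + 1] (Order.succ β) := (Function.iterate_succ_apply' h n _).symm
      _ ≤ nfp h (Order.succ β) := iterate_le_nfp h _ _
  · have hbdd : BddAbove D := ⟨β, hDβ⟩
    have hsup : sSup D < ω1 := (csSup_le ⟨d, hd⟩ hDβ).trans_lt hβ
    have hsup0 : 0 < sSup D := (hD hd).2.1.trans_le (le_csSup hbdd hd)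
    refine ⟨hsup, hsup0, fun i hi => (hC i).mem_of_forall_lt_exists hsup hsup0 fun γ hγ => ?_⟩
    obtain ⟨e, he, hlt⟩ := exists_lt_of_lt_csSup ⟨d, hd⟩ (max_lt hγ hi)
    exact ⟨e, (hD he).2.2 i ((le_max_right _ _).trans_lt hlt), (le_max_left _ _).trans_lt hlt,
      le_csSup hbdd he⟩

lemma isClubIn_Ioo {α : Ordinal} (hα : α < ω1) : IsClubIn (Ioo α ω1) := by
  refine ⟨fun _ h => h.2, fun β hβ => ?_, fun D hD ⟨d, hd⟩ ⟨β, hβ, hDβ⟩ => ?_⟩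
  · exact ⟨Order.succ (max α β), ⟨(le_max_left α β).trans_lt (Order.lt_succ _),
      isSuccLimit_omega1.succ_lt (max_lt hα hβ)⟩, (le_max_right α β).trans_lt (Order.lt_succ _)⟩
  · exact ⟨(hD hd).1.trans_le (le_csSup ⟨β, hDβ⟩ hd), (csSup_le ⟨d, hd⟩ hDβ).trans_lt hβ⟩

lemma IsStat.mono {A B : Set Ordinal} (hA : IsStat A) (hAB : A ⊆ B) : IsStat B :=
  fun C hC => (hA C hC).mono (inter_subset_inter_left C hAB)

lemma IsStat.nontrivial {A : Set Ordinal} (hA : IsStat A) : A.Nontrivial := by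
  obtain ⟨α, hαA, -, hα⟩ := hA _ (isClubIn_Ioo omega1_pos)
  obtain ⟨β, hβA, hαβ, -⟩ := hA _ (isClubIn_Ioo hα)
  exact ⟨α, hαA, β, hβA, hαβ.ne⟩

lemma IsStat.exists_isStat_of_iUnion {ι : Type*} [Countable ι] {A : ι → Set Ordinal}
    (hA : IsStat (⋃ i, A i)) : ∃ i, IsStat (A i) := by
  by_contra! hnot
  simp only [IsStat, not_forall, not_nonempty_iff_eq_empty] at hnot
  choose C hC hAC using hnot
  obtain ⟨α, hαA, -, hα0, hαC⟩ :=
    hA _ (IsClubIn.diagonal (fun _ => 0) hC fun _ _ => to_countable _)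
  obtain ⟨i, hi⟩ := mem_iUnion.1 hαA
  exact (hAC i).subset ⟨hi, hαC i hα0⟩

lemma IsStat.union {A B : Set Ordinal} (h : IsStat (A ∪ B)) : IsStat A ∨ IsStat B := by
  rw [union_eq_iUnion] at h
  obtain ⟨_ | _, hb⟩ := h.exists_isStat_of_iUnion
  exacts [Or.inr hb, Or.inl hb]

theorem IsStat.exists_isStat_fiber {T : Set Ordinal} (hT : IsStat T) {f : Ordinal → Ordinal}
    (hf : ∀ α ∈ T, f α < α) : ∃ γ, IsStat {α ∈ T | f α = γ} := by
  by_contra! hnot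
  simp only [IsStat, not_forall, not_nonempty_iff_eq_empty] at hnot
  choose C hC hTC using hnot
  obtain ⟨α, hαT, -, -, hαC⟩ :=
    hT _ (IsClubIn.diagonal id hC fun _ => countable_Iic_of_lt_omega1)
  exact (hTC (f α)).subset ⟨⟨hαT, rfl⟩, hαC _ (hf α hαT)⟩

/-- Nodes of the complete binary tree, listed from the root (`false` = left child), compared in
in-order: left subtree < node < right subtree. -/
def InOrderLt : List Bool → List Bool → Prop
  | [], [] => False
  | [], b :: _ => b = true
  | a :: _, [] => a = false
  | a :: s, b :: t => a < b ∨ a = b ∧ InOrderLt s t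

namespace InOrderLt

lemma irrefl : ∀ s, ¬ InOrderLt s s
  | [] => id
  | a :: s => by simpa [InOrderLt] using irrefl s

lemma trans : ∀ s t u, InOrderLt s t → InOrderLt t u → InOrderLt s u
  | [], [], _, h, _ => h.elim
  | [], _ :: _, [], rfl, h => nomatch h
  | [], b :: _, c :: _, h₁, h₂ => by cases b <;> cases c <;> simp_all [InOrderLt, Bool.lt_iff]
  | _ :: _, [], [], _, h => h.elim
  | a :: _, [], c :: _, h₁, h₂ => by cases a <;> cases c <;> simp_all [InOrderLt, Bool.lt_iff]
  | a :: _, b :: _, [], h₁, h₂ => by cases a <;> cases b <;> simp_all [InOrderLt, Bool.lt_iff]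
  | a :: s, b :: t, c :: u, h₁, h₂ => by
    have := trans s t u
    cases a <;> cases b <;> cases c <;> simp_all [InOrderLt, Bool.lt_iff]

lemma trichotomous : ∀ s t, InOrderLt s t ∨ s = t ∨ InOrderLt t s
  | [], [] => by simp
  | [], b :: _ => by cases b <;> simp [InOrderLt]
  | a :: _, [] => by cases a <;> simp [InOrderLt]
  | a :: s, b :: t => by
    have := trichotomous s t
    cases a <;> cases b <;> simp_all [InOrderLt, Bool.lt_iff]

lemma lt_append_true : ∀ s, InOrderLt s (s ++ [true])
  | [] => rfl
  | _ :: s => Or.inr ⟨rfl, lt_append_true s⟩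

lemma append_false_lt : ∀ s, InOrderLt (s ++ [false]) s
  | [] => rfl
  | _ :: s => Or.inr ⟨rfl, append_false_lt s⟩

lemma exists_between : ∀ s t, InOrderLt s t → ∃ m, InOrderLt s m ∧ InOrderLt m t
  | [], [], h => h.elim
  | [], b :: t, h => ⟨true :: (t ++ [false]), by simp [InOrderLt], by
      simpa [InOrderLt, show b = true from h] using append_false_lt t⟩
  | a :: s, [], h => ⟨false :: (s ++ [true]), by
      simpa [InOrderLt, show a = false from h] using lt_append_true s, by simp [InOrderLt]⟩
  | a :: s, b :: t, Or.inl hab => ⟨a :: (s ++ [true]), Or.inr ⟨rfl, lt_append_true s⟩,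
      Or.inl hab⟩
  | a :: s, _ :: t, Or.inr ⟨rfl, h⟩ =>
    have ⟨m, hsm, hmt⟩ := exists_between s t h
    ⟨a :: m, Or.inr ⟨rfl, hsm⟩, Or.inr ⟨rfl, hmt⟩⟩

end InOrderLt

def InOrder : Type := List Bool

namespace InOrder

instance : IsStrictTotalOrder InOrder InOrderLt where
  trichotomous s t h₁ h₂ := ((InOrderLt.trichotomous s t).resolve_left h₁).resolve_right h₂
  irrefl := InOrderLt.irrefl
  trans := InOrderLt.trans

noncomputable instance : LinearOrder InOrder :=
  @linearOrderOfSTO _ InOrderLt _ (Classical.decRel _)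

instance : DenselyOrdered InOrder := ⟨InOrderLt.exists_between⟩

instance : Countable InOrder := inferInstanceAs (Countable (List Bool))

instance : Nontrivial InOrder := ⟨⟨[], [true], List.cons_ne_nil _ _ ∘ Eq.symm⟩⟩

end InOrder

/-- Doubling every letter and appending `[false, true]` makes distinct nodes incomparable
under the prefix order while keeping their in-order position. -/
def doubledCode : List Bool → List Bool
  | [] => [false, true]
  | a :: s => a :: a :: doubledCode s

lemma InOrderLt.exists_doubledCode_eq : ∀ s t, InOrderLt s t →
    ∃ c u v, doubledCode s = c ++ false :: u ∧ doubledCode t = c ++ true :: v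
  | [], [], h => h.elim
  | [], _ :: t, rfl => ⟨[], [true], true :: doubledCode t, rfl, rfl⟩
  | _ :: s, [], rfl => ⟨[false], doubledCode s, [], rfl, rfl⟩
  | a :: s, b :: t, Or.inl hab => by
    obtain ⟨rfl, rfl⟩ : a = false ∧ b = true := by simpa [Bool.lt_iff] using hab
    exact ⟨[], false :: doubledCode s, true :: doubledCode t, rfl, rfl⟩
  | a :: s, _ :: t, Or.inr ⟨rfl, h⟩ =>
    have ⟨c, u, v, hs, ht⟩ := exists_doubledCode_eq s t h
    ⟨a :: a :: c, u, v, by simp [doubledCode, hs], by simp [doubledCode, ht]⟩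

theorem exists_rat_embedding_of_forall_split {α : Type*} (r : α → α → Prop) {A₀ : Set α}
    (P : Set α → Prop) (hne : ∀ A, P A → A.Nonempty)
    (hsplit : ∀ A ⊆ A₀, P A → ∃ B ⊆ A, ∃ C ⊆ A, P B ∧ P C ∧ ∀ b ∈ B, ∀ c ∈ C, r b c)
    (h₀ : P A₀) : ∃ f : ℚ → α, (∀ q, f q ∈ A₀) ∧ ∀ p q, p < q → r (f p) (f q) := by
  let Good := {A // A ⊆ A₀ ∧ P A}
  have hsplit' (A : Good) : ∃ B C : Good, B.1 ⊆ A.1 ∧ C.1 ⊆ A.1 ∧ ∀ b ∈ B.1, ∀ c ∈ C.1, r b c :=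
    have ⟨B, hBA, C, hCA, hB, hC, hBC⟩ := hsplit A.1 A.2.1 A.2.2
    ⟨⟨B, hBA.trans A.2.1, hB⟩, ⟨C, hCA.trans A.2.1, hC⟩, hBA, hCA, hBC⟩
  choose L R hL hR hLR using hsplit'
  let step (A : Good) (b : Bool) : Good := bif b then R A else L A
  have step_subset (u : List Bool) : ∀ A, (u.foldl step A).1 ⊆ A.1 := by
    induction u with
    | nil => exact fun A => subset_rfl
    | cons b u ih => exact fun A => (ih (step A b)).trans (by cases b; exacts [hL A, hR A])
  let node (s : List Bool) : Good := s.foldl step ⟨A₀, subset_rfl, h₀⟩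
  obtain ⟨e⟩ := Order.embedding_from_countable_to_dense ℚ InOrder
  let f (q : ℚ) : α := (hne _ (node (doubledCode (e q))).2.2).some
  have hf (q : ℚ) : f q ∈ (node (doubledCode (e q))).1 := Nonempty.some_mem _
  refine ⟨f, fun q => (node _).2.1 (hf q), fun p q hpq => ?_⟩
  obtain ⟨c, u, v, hp, hq⟩ := InOrderLt.exists_doubledCode_eq _ _ (e.lt_iff_lt.2 hpq)
  have node_append (c u : List Bool) (b : Bool) : (node (c ++ b :: u)).1 ⊆ (step (node c) b).1 := by
    simpa only [node, List.foldl_append, List.foldl_cons] using step_subset u _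
  exact hLR (node c) _ (node_append c u false (hp ▸ hf p)) _ (node_append c v true (hq ▸ hf q))

section Ladder

variable {x : Ordinal → ℕ → Ordinal}

def ladderCylinder (x : Ordinal → ℕ → Ordinal) (A : Set Ordinal) (α : Ordinal) (n : ℕ) :
    Set Ordinal :=
  {β ∈ A | x β ∈ PiNat.cylinder (x α) n}

lemma ladderCylinder_mono {A B : Set Ordinal} (hAB : A ⊆ B) (α : Ordinal) (n : ℕ) :
    ladderCylinder x A α n ⊆ ladderCylinder x B α n :=
  fun _ hβ => ⟨hAB hβ.1, hβ.2⟩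

/-- Fodor's lemma, applied once per coordinate. -/
theorem IsStat.exists_isStat_ladderCylinder {T : Set Ordinal} (hT : IsStat T)
    (hreg : ∀ β ∈ T, ∀ n, x β n < β) (n : ℕ) : ∃ α ∈ T, IsStat (ladderCylinder x T α n) := by
  induction n with
  | zero =>
    obtain ⟨α, hα⟩ := hT.nontrivial.nonempty
    exact ⟨α, hα, by simpa [ladderCylinder, PiNat.cylinder_zero] using hT⟩
  | succ n ih =>
    obtain ⟨α, -, hα⟩ := ih
    obtain ⟨γ, hγ⟩ := hα.exists_isStat_fiber fun β hβ => hreg β hβ.1 n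
    obtain ⟨α', ⟨hα'T, hα'α⟩, hα'γ⟩ := hγ.nontrivial.nonempty
    refine ⟨α', hα'T, hγ.mono fun β ⟨⟨hβT, hβα⟩, hβγ⟩ => ⟨hβT, fun i hi => ?_⟩⟩
    rcases (Nat.lt_succ_iff.1 hi).lt_or_eq with hi | rfl
    · rw [hβα i hi, hα'α i hi]
    · rw [hβγ, hα'γ]

lemma not_isStat_setOf_not_isStat_ladderCylinder {T : Set Ordinal}
    (hreg : ∀ β ∈ T, ∀ n, x β n < β) (n : ℕ) :
    ¬ IsStat {α ∈ T | ¬ IsStat (ladderCylinder x T α n)} := fun hN =>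
  have ⟨α, hα, hαN⟩ := hN.exists_isStat_ladderCylinder (fun β hβ => hreg β hβ.1) n
  hα.2 (hαN.mono (ladderCylinder_mono (sep_subset _ _) α n))

lemma LexLt.exists_ladderCylinder_lexLt {α β : Ordinal} (h : LexLt x α β) (A : Set Ordinal) :
    ∃ n, ∀ α' ∈ ladderCylinder x A α n, ∀ β' ∈ ladderCylinder x A β n, LexLt x α' β' := by
  obtain ⟨k, hlt, hk⟩ := h
  refine ⟨k + 1, fun α' hα' β' hβ' => ⟨k, fun m hm => ?_, ?_⟩⟩
  · rw [hα'.2 m (hm.trans k.lt_succ_self), hβ'.2 m (hm.trans k.lt_succ_self), hlt m hm]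
  · rwa [hα'.2 k k.lt_succ_self, hβ'.2 k k.lt_succ_self]

variable {S : Set Ordinal}

lemma IsLadderOn.injOn (hx : IsLadderOn S x) : InjOn x S := by
  have hle : ∀ α ∈ S, ∀ β ∈ S, x α = x β → α ≤ β := fun α hα β hβ hxy =>
    le_of_forall_lt fun γ hγ =>
      have ⟨n, hn⟩ := (hx α hα).2.2.2.2 γ hγ
      hn.trans (hxy ▸ (hx β hβ).2.2.2.1 n)
  exact fun α hα β hβ hxy => (hle α hα β hβ hxy).antisymm (hle β hβ α hα hxy.symm)

lemma IsLadderOn.lexLt_or_lexLt (hx : IsLadderOn S x) {α β : Ordinal} (hα : α ∈ S)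
    (hβ : β ∈ S) (hne : α ≠ β) : LexLt x α β ∨ LexLt x β α := by
  rcases lt_trichotomy (toLex (x α)) (toLex (x β)) with h | h | h
  · exact Or.inl h
  · exact absurd (hx.injOn hα hβ h) hne
  · exact Or.inr h

theorem IsLadderOn.exists_isStat_lexLt_separated (hx : IsLadderOn S x) {A : Set Ordinal}
    (hAS : A ⊆ S) (hA : IsStat A) :
    ∃ B ⊆ A, ∃ C ⊆ A, IsStat B ∧ IsStat C ∧ ∀ β ∈ B, ∀ γ ∈ C, LexLt x β γ := by
  have hreg : ∀ β ∈ A, ∀ n, x β n < β := fun β hβ => (hx β (hAS hβ)).2.2.2.1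
  set G := {α ∈ A | ∀ n, IsStat (ladderCylinder x A α n)}
  have hG : IsStat G := by
    refine (hA.mono fun α hα => ?_).union.resolve_right fun hN =>
      have ⟨n, hn⟩ := hN.exists_isStat_of_iUnion
      not_isStat_setOf_not_isStat_ladderCylinder hreg n hn
    rcases forall_or_exists_not fun n => IsStat (ladderCylinder x A α n) with h | ⟨n, hn⟩
    exacts [Or.inl ⟨hα, h⟩, Or.inr (mem_iUnion.2 ⟨n, hα, hn⟩)]
  obtain ⟨α, hα, β, hβ, hne⟩ := hG.nontrivial
  wlog hαβ : LexLt x α β generalizing α β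
  · exact this β hβ α hα hne.symm
      ((hx.lexLt_or_lexLt (hAS hα.1) (hAS hβ.1) hne).resolve_left hαβ)
  obtain ⟨n, hn⟩ := hαβ.exists_ladderCylinder_lexLt A
  exact ⟨_, sep_subset _ _, _, sep_subset _ _, hα.2 n, hβ.2 n, hn⟩

end Ladder

/-- A Baumgartner type indexed by a stationary set is not σ-scattered. -/
theorem baumgartner_not_sigma_scattered (S : Set Ordinal) (x : Ordinal → ℕ → Ordinal)
    (hstat : IsStat S) (hx : IsLadderOn S x) :
    ¬ RelSigmaScatteredOn (LexLt x) S := by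
  rintro ⟨A, hAS, hscat⟩
  obtain ⟨n, hn⟩ := (hAS ▸ hstat : IsStat (⋃ n, A n)).exists_isStat_of_iUnion
  have hnS : A n ⊆ S := hAS ▸ subset_iUnion A n
  exact hscat n (exists_rat_embedding_of_forall_split (LexLt x) IsStat
    (fun _ h => h.nontrivial.nonempty)
    (fun B hB => hx.exists_isStat_lexLt_separated (hB.trans hnS)) hn)
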